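/- Let α be a self-conjugate partition of n with exactly m ≥ 2 distinct part sizes r₁ > r₂ > ⋯ > r_m, where r₁ occurs k₁ times. If a partition β of n has a part x with max{2(r₂ − k₁), r₁ + r₂ − k₁} ≤ x ≤ 2(r₁ − k₁), then χ^α(β) = 0. -/

import Mathlib

open scoped Classical

/-- A function `α : ℕ → ℕ` (listing the parts, 0-indexed, weakly decreasing,
finitely supported) is a partition of `n`. -/
def IsPartitionFun (α : ℕ → ℕ) (n : ℕ) : Prop :=
  Antitone α ∧ (Function.support α).Finite ∧ ∑ᶠ i, α i = n

/-- A list of parts (weakly decreasing, positive) is a partition of `n`. -/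
def IsPartitionList (β : List ℕ) (n : ℕ) : Prop :=
  β.Pairwise (· ≥ ·) ∧ (∀ b ∈ β, 0 < b) ∧ β.sum = n

/-- The conjugate (transpose) partition: `conjPart α j` is the number of rows `i`
with `α i > j`, i.e. the length of column `j` (0-indexed). -/
noncomputable def conjPart (α : ℕ → ℕ) (j : ℕ) : ℕ :=
  Set.ncard {i | j < α i}

/-- Hook length at the (0-indexed) node `(i, j)`. -/
noncomputable def hookLen (α : ℕ → ℕ) (i j : ℕ) : ℕ :=
  (α i - j) + (conjPart α j - i) - 1

/-- Leg length at the (0-indexed) node `(i, j)`. -/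
noncomputable def legLen (α : ℕ → ℕ) (i j : ℕ) : ℕ :=
  conjPart α j - i - 1

/-- The partition obtained by removing the rim hook of the `(i,j)`-hook. -/
noncomputable def removeHook (α : ℕ → ℕ) (i j : ℕ) : ℕ → ℕ := fun t =>
  if t < i then α t
  else if t + 1 < conjPart α j then α (t + 1) - 1
  else if t + 1 = conjPart α j then j
  else α t

/-- The value `χ^α(β)` of the irreducible character of the symmetric group
indexed by the partition `α`, at the conjugacy class of cycle type `β`,
defined via the Murnaghan–Nakayama rule. -/
noncomputable def charValue (α : ℕ → ℕ) : List ℕ → ℤ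
  | [] => if ∀ i, α i = 0 then 1 else 0
  | b :: rest =>
      ∑ᶠ (i : ℕ), ∑ᶠ (j : ℕ),
        if j < α i ∧ hookLen α i j = b then
          (-1) ^ legLen α i j * charValue (removeHook α i j) rest
        else 0

/-- The degree of `χ^α`, i.e. its value on the identity `(1^n)`. -/
noncomputable def charDegree (α : ℕ → ℕ) (n : ℕ) : ℤ :=
  charValue α (List.replicate n 1)

/-!
Encode a partition `γ` by its beta-set `{γ t - t}` ⊆ ℤ. Removing a rim hook of length `h`
replaces some beta-number `a` by `a - h`, which is not a beta-number. Suppose all beta-numbers are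
`≤ x` and the beta-set is closed under subtracting any `e ∈ [x, U]`. Then there is no hook of
length in `[x, U]`, and removing a hook of length `> U` preserves both properties. So the
Murnaghan–Nakayama recursion cannot remove the part `x` of `β`, and `χ(β) = 0`.

For self-conjugate `α`, the complement of the beta-set is its reflection `v ↦ 1 - v`. The
beta-numbers of `α` avoid the gap `(r₂ - k₁, r₁ - k₁]`. If `a` is one of the top `k₁` beta-numbers,
`1 - (a - e)` lies in that gap, so `a - e` is a beta-number. The other beta-numbers minus `e`
drop to `≤ -r₁`, and every integer that small is a beta-number.
-/

def betaSet (γ : ℕ → ℕ) : Set ℤ := Set.range fun t : ℕ => (γ t : ℤ) - t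

lemma strictAnti_beta {γ : ℕ → ℕ} (hA : Antitone γ) : StrictAnti fun t : ℕ => (γ t : ℤ) - t :=
  fun s t hst => by have := hA hst.le; dsimp only; omega

section Bounded

variable {γ : ℕ → ℕ} {N : ℕ} (hA : Antitone γ) (hN : ∀ t, N ≤ t → γ t = 0)
include hA hN

lemma lt_conjPart_iff (j t : ℕ) : j < γ t ↔ t < conjPart γ j := by
  have hex : ∃ s, γ s ≤ j := ⟨N, by simp [hN N le_rfl]⟩
  have hset : {s | j < γ s} = Set.Iio (Nat.find hex) := by
    ext s
    simp only [Set.mem_ofPred_eq, Set.mem_Iio, Nat.lt_find_iff, not_le]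
    exact ⟨fun h m hm => h.trans_le (hA hm), fun h => h s le_rfl⟩
  rw [conjPart, hset, Set.ncard_Iio_nat]
  exact Set.ext_iff.1 hset t

lemma conjPart_le (j : ℕ) : conjPart γ j ≤ N := by
  by_contra! h
  have := (lt_conjPart_iff hA hN j N).2 h
  simp [hN N le_rfl] at this

omit hA in
lemma Iic_subset_betaSet : Set.Iic (-(N : ℤ)) ⊆ betaSet γ := fun v hv =>
  ⟨(-v).toNat, by rw [Set.mem_Iic] at hv; show (γ _ : ℤ) - _ = v; rw [hN _ (by omega)]; omega⟩

lemma beta_sub_hookLen {i j : ℕ} (hj : j < γ i) :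
    (γ i : ℤ) - i - hookLen γ i j = j + 1 - conjPart γ j := by
  have := (lt_conjPart_iff hA hN j i).1 hj
  rw [hookLen]; omega

lemma notMem_betaSet_iff (v : ℤ) : v ∉ betaSet γ ↔ ∃ j : ℕ, v = j + 1 - conjPart γ j := by
  constructor
  · intro hv
    have hex : ∃ c : ℕ, (γ c : ℤ) - c < v :=
      ⟨N + v.natAbs + 1, by rw [hN _ (by omega)]; omega⟩
    obtain ⟨c, hc, hbefore⟩ : ∃ c : ℕ, (γ c : ℤ) - c < v ∧ ∀ t < c, v < (γ t : ℤ) - t :=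
      ⟨Nat.find hex, Nat.find_spec hex, fun t ht =>
        lt_of_le_of_ne (not_lt.1 (Nat.find_min hex ht)) fun h => hv ⟨t, h.symm⟩⟩
    refine ⟨(v + c - 1).toNat, ?_⟩
    have hiff : ∀ t, (v + c - 1).toNat < γ t ↔ t < c := fun t => by
      constructor
      · intro h; by_contra! ht; have := hA ht; omega
      · intro ht; have := hbefore (c - 1) (by omega); have := hA (Nat.le_sub_one_of_lt ht); omega
    have hconj : conjPart γ (v + c - 1).toNat = c :=
      eq_of_forall_lt_iff fun t => (lt_conjPart_iff hA hN _ t).symm.trans (hiff t)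
    omega
  · rintro ⟨j, rfl⟩ ⟨t, ht⟩
    have := lt_conjPart_iff hA hN j t
    dsimp only at ht
    omega

end Bounded

section RemoveHook

variable {γ : ℕ → ℕ} {N : ℕ} (hA : Antitone γ) (hN : ∀ t, N ≤ t → γ t = 0) {i j : ℕ}
  (hj : j < γ i)
include hA hN hj

lemma antitone_removeHook : Antitone (removeHook γ i j) := by
  have hic := (lt_conjPart_iff hA hN j i).1 hj
  refine antitone_nat_of_succ_le fun t => ?_
  have h0 : γ (t + 1) ≤ γ t := hA (by omega)
  have h1 : γ (t + 1 + 1) ≤ γ (t + 1) := hA (by omega)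
  have h2 : t < i → γ i ≤ γ t := fun h => hA h.le
  have c1 := lt_conjPart_iff hA hN j (t + 1)
  have c2 := lt_conjPart_iff hA hN j (t + 1 + 1)
  unfold removeHook
  split_ifs <;> omega

lemma removeHook_eq_zero (t : ℕ) (ht : N ≤ t) : removeHook γ i j t = 0 := by
  have := conjPart_le hA hN j
  have := (lt_conjPart_iff hA hN j i).1 hj
  unfold removeHook
  split_ifs <;> first | omega | exact hN t ht

lemma betaSet_removeHook :
    betaSet (removeHook γ i j) =
      insert ((j : ℤ) + 1 - conjPart γ j) (betaSet γ \ {(γ i : ℤ) - i}) := by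
  have hic := (lt_conjPart_iff hA hN j i).1 hj
  have hne : ∀ s, s ≠ i → (γ s : ℤ) - s ≠ (γ i : ℤ) - i := fun s hs =>
    (strictAnti_beta hA).injective.ne hs
  ext v
  simp only [betaSet, Set.mem_insert_iff, Set.mem_sdiff, Set.mem_range, Set.mem_singleton_iff]
  constructor
  · rintro ⟨t, rfl⟩
    unfold removeHook
    split_ifs with h1 h2 h3
    · exact Or.inr ⟨⟨t, rfl⟩, hne t (by omega)⟩
    · have := (lt_conjPart_iff hA hN j (t + 1)).2 h2
      have := hne (t + 1) (by omega)
      push_cast at this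
      exact Or.inr ⟨⟨t + 1, by push_cast; omega⟩, by omega⟩
    · left; omega
    · exact Or.inr ⟨⟨t, rfl⟩, hne t (by omega)⟩
  · rintro (rfl | ⟨⟨s, rfl⟩, hs⟩)
    · exact ⟨conjPart γ j - 1, by unfold removeHook; split_ifs <;> omega⟩
    · have hsi : s ≠ i := by rintro rfl; exact hs rfl
      by_cases hmid : i < s ∧ s < conjPart γ j
      · have := (lt_conjPart_iff hA hN j s).2 hmid.2
        refine ⟨s - 1, ?_⟩
        unfold removeHook
        split_ifs <;> first | omega | (rw [Nat.sub_add_cancel (by omega)]; omega)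
      · exact ⟨s, by unfold removeHook; split_ifs <;> omega⟩

end RemoveHook

lemma charValue_cons_eq_zero {γ : ℕ → ℕ} {b : ℕ} {rest : List ℕ}
    (h : ∀ i j, j < γ i → hookLen γ i j = b → charValue (removeHook γ i j) rest = 0) :
    charValue γ (b :: rest) = 0 := by
  rw [charValue]
  refine finsum_eq_zero_of_forall_eq_zero fun i => finsum_eq_zero_of_forall_eq_zero fun j => ?_
  split_ifs with hij
  · rw [h i j hij.1 hij.2, mul_zero]
  · rfl

theorem charValue_eq_zero_of_sub_mem_betaSet {x U : ℕ} (hxU : x ≤ U) {L : List ℕ}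
    (hL : L.Pairwise (· ≥ ·)) (hx : x ∈ L) {γ : ℕ → ℕ} (hA : Antitone γ)
    (hU : ∀ t, U ≤ t → γ t = 0) (hle : betaSet γ ⊆ Set.Iic (x : ℤ))
    (hsub : ∀ a ∈ betaSet γ, ∀ e ∈ Set.Icc x U, a - e ∈ betaSet γ) :
    charValue γ L = 0 := by
  induction L generalizing γ with
  | nil => simp at hx
  | cons b rest ih =>
    obtain ⟨hb, hrest⟩ := List.pairwise_cons.1 hL
    have hxb : x ≤ b := (List.mem_cons.1 hx).elim (·.le) (hb x)
    refine charValue_cons_eq_zero fun i j hj hhook => ?_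
    have hmem : (γ i : ℤ) - i ∈ betaSet γ := ⟨i, rfl⟩
    have hax : (γ i : ℤ) - i ≤ x := hle hmem
    have hgap : (γ i : ℤ) - i - b ∉ betaSet γ := by
      rw [← hhook, beta_sub_hookLen hA hU hj, notMem_betaSet_iff hA hU]
      exact ⟨j, rfl⟩
    have hbU : U < b := by
      by_contra! hbU
      exact hgap (hsub _ hmem b ⟨hxb, hbU⟩)
    -- `a - b` (with `a = γ i - i`) is no beta-number, but every integer `≤ -U` is; so `a > 0`
    have hpos : (b : ℤ) - U < (γ i : ℤ) - i := by
      by_contra! h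
      exact hgap (Iic_subset_betaSet hU (by rw [Set.mem_Iic]; omega))
    have hβ := betaSet_removeHook hA hU hj
    rw [← beta_sub_hookLen hA hU hj, hhook] at hβ
    refine ih hrest ((List.mem_cons.1 hx).resolve_left (by omega)) (antitone_removeHook hA hU hj)
      (removeHook_eq_zero hA hU hj) ?_ ?_ <;> rw [hβ]
    · rintro v (rfl | ⟨hv, -⟩)
      · rw [Set.mem_Iic]; omega
      · exact hle hv
    · rintro v (rfl | ⟨hv, -⟩) e ⟨hxe, heU⟩ <;> refine Or.inr ⟨?_, ?_⟩
      · exact Iic_subset_betaSet hU (by rw [Set.mem_Iic]; omega)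
      · rw [Set.mem_singleton_iff]; omega
      · exact hsub v hv e ⟨hxe, heU⟩
      · have := hle hv; rw [Set.mem_Iic] at this; rw [Set.mem_singleton_iff]; omega

lemma exists_forall_le_eq_zero_of_support_finite {γ : ℕ → ℕ} (h : (Function.support γ).Finite) :
    ∃ N, ∀ t, N ≤ t → γ t = 0 := by
  obtain ⟨M, hM⟩ := h.bddAbove
  exact ⟨M + 1, fun t ht => by_contra fun h0 => by have := hM h0; omega⟩

lemma conjPart_head_sub_one {γ : ℕ → ℕ} (hA : Antitone γ) (h0 : 0 < γ 0) :
    conjPart γ (γ 0 - 1) = Set.ncard {s | γ s = γ 0} := by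
  rw [conjPart]
  congr 1
  ext s
  have := hA (Nat.zero_le s)
  simp only [Set.mem_ofPred_eq]
  omega

section SelfConjugate

variable {γ : ℕ → ℕ} {N : ℕ} (hA : Antitone γ) (hN : ∀ t, N ≤ t → γ t = 0)
  (hsc : conjPart γ = γ)
include hA hN hsc

lemma eq_zero_of_head_le {t : ℕ} (ht : γ 0 ≤ t) : γ t = 0 := by
  have := lt_conjPart_iff hA hN 0 t
  rw [hsc] at this
  omega

lemma ncard_setOf_eq_head_le (hk : 0 < γ (Set.ncard {s | γ s = γ 0})) :
    Set.ncard {s | γ s = γ 0} ≤ γ (Set.ncard {s | γ s = γ 0}) := by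
  have hk0 : Set.ncard {s | γ s = γ 0} < γ 0 :=
    not_le.1 fun h => by simp [eq_zero_of_head_le hA hN hsc h] at hk
  calc Set.ncard {s | γ s = γ 0} = γ (γ 0 - 1) := by
        rw [← conjPart_head_sub_one hA (by omega), hsc]
    _ ≤ _ := hA (by omega)

lemma one_sub_mem_betaSet {v : ℤ} (hv : v ∉ betaSet γ) : 1 - v ∈ betaSet γ := by
  obtain ⟨j, rfl⟩ := (notMem_betaSet_iff hA hN v).1 hv
  exact ⟨j, by rw [hsc]; ring⟩

end SelfConjugate

/-- For a self-conjugate `α` with at least two distinct part sizes `r₁ > r₂` (with `r₁`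
of multiplicity `k₁`): if `β` has a part `x` with
`max (2(r₂ - k₁)) (r₁ + r₂ - k₁) ≤ x ≤ 2(r₁ - k₁)`, then `χ^α(β) = 0`. -/
theorem stmt_15 (n : ℕ) (α : ℕ → ℕ) (hα : IsPartitionFun α n) (hsc : conjPart α = α)
    (β : List ℕ) (hβ : IsPartitionList β n)
    (r1 k1 r2 : ℕ)
    (hr1 : r1 = α 0) (hk1 : k1 = Set.ncard {t | α t = α 0}) (hr2 : r2 = α k1)
    (hm2 : 0 < r2 ∧ r2 < r1)
    (x : ℕ) (hx : x ∈ β)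
    (h1 : max (2 * (r2 - k1)) (r1 + r2 - k1) ≤ x) (h2 : x ≤ 2 * (r1 - k1)) :
    charValue α β = 0 := by
  obtain ⟨hA, hfin, -⟩ := hα
  obtain ⟨hr2pos, hr2r1⟩ := hm2
  obtain ⟨N, hN⟩ := exists_forall_le_eq_zero_of_support_finite hfin
  have hlen : ∀ t, r1 ≤ t → α t = 0 := fun t ht => eq_zero_of_head_le hA hN hsc (hr1 ▸ ht)
  have hrow (t : ℕ) : t < k1 ↔ α t = r1 := by
    rw [hk1, hr1, ← conjPart_head_sub_one hA (by omega), ← lt_conjPart_iff hA hN]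
    have := hA (Nat.zero_le t)
    omega
  have hk1r2 : k1 ≤ r2 := by
    have := ncard_setOf_eq_head_le hA hN hsc (by rwa [← hk1, ← hr2])
    rwa [← hk1, ← hr2] at this
  have hgap : ∀ a ∈ betaSet α, a ≤ (r2 : ℤ) - k1 ∨ (r1 : ℤ) - k1 < a ∧ a ≤ r1 := by
    rintro _ ⟨t, rfl⟩
    dsimp only
    by_cases ht : t < k1
    · have := (hrow t).1 ht
      omega
    · have := hA (not_lt.1 ht)
      omega
  have hx1 := (le_max_right _ _).trans h1
  refine charValue_eq_zero_of_sub_mem_betaSet h2 hβ.1 hx hA (fun t ht => hlen t (by omega)) ?_ ?_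
  · intro a ha
    rw [Set.mem_Iic]
    rcases hgap a ha with h | h <;> omega
  · rintro a ha e ⟨hxe, heU⟩
    rcases hgap a ha with h | h
    · exact Iic_subset_betaSet hlen (by rw [Set.mem_Iic]; omega)
    · by_contra hv
      rcases hgap _ (one_sub_mem_betaSet hA hN hsc hv) with h' | h' <;> omega
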